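/- arXiv:1807.07652 — 2 statements merged into one kernel-verified Lean document; each statement's English description precedes it below -/
import Mathlib

section
/- Let S ⊆ Z/NZ be nonempty with 0 ∉ S and S = −S, let k0 be the least positive integer with k0 mod N ∈ S, and suppose S − k0 := {s − k0 : s ∈ S} is a subgroup of Z/NZ of order d := |S|. Then S = { k0 + p·N/d mod N : p = 0, 1, …, d−1 }, k0 < N/d, and N = 2·k0·d. -/
/-- Structure of `Γ_ii^-` under the linking condition: if `S ⊆ ℤ/Nℤ` with `0 ∉ S`,
`S = −S`, `k0` the least positive integer with `k0 mod N ∈ S`, and `S − k0` a subgroup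
of `ℤ/Nℤ` of order `d = |S|`, then `S = {k0 + p·N/d : p = 0,…,d−1}`, `k0 < N/d`
and `N = 2·k0·d`. -/
theorem stmt_1 (N : ℕ) (hN : 0 < N) (S : Finset (ZMod N)) (hS : S.Nonempty)
    (h0 : (0 : ZMod N) ∉ S) (hneg : ∀ s ∈ S, -s ∈ S)
    (k0 : ℕ) (hk0 : 0 < k0) (hk0S : (k0 : ZMod N) ∈ S)
    (hmin : ∀ m : ℕ, 0 < m → (m : ZMod N) ∈ S → k0 ≤ m)
    (H : AddSubgroup (ZMod N)) (hcard : Nat.card H = S.card)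
    (hH : ∀ x : ZMod N, x ∈ S ↔ x - (k0 : ZMod N) ∈ H) :
    S = Finset.image
        (fun p : ℕ => (k0 : ZMod N) + (p : ZMod N) * ((N / S.card : ℕ) : ZMod N))
        (Finset.range S.card)
      ∧ k0 < N / S.card ∧ N = 2 * k0 * S.card := by
  classical
  haveI : NeZero N := ⟨hN.ne'⟩
  set d := S.card with hd_def
  have hd : 0 < d := Finset.card_pos.mpr hS
  have hdvd : d ∣ N := by
    have h := AddSubgroup.card_addSubgroup_dvd_card H
    rwa [hcard, Nat.card_zmod] at h
  set m := N / d with hm_def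
  have hmd : m * d = N := Nat.div_mul_cancel hdvd
  have hm : 0 < m := Nat.div_pos (Nat.le_of_dvd hN hdvd) hd
  -- every element of H is killed by d
  have hkill : ∀ x ∈ H, (d : ℕ) • x = 0 := by
    intro x hx
    have h1 : (Nat.card H) • (⟨x, hx⟩ : H) = 0 := card_nsmul_eq_zero'
    rw [hcard] at h1
    have h2 := congrArg (Subtype.val) h1
    simpa using h2
  -- each element of H is a multiple p * m with p < d
  have hval : ∀ x ∈ H, ∃ p < d, x = ((p * m : ℕ) : ZMod N) := by
    intro x hx
    have h1 : ((d * x.val : ℕ) : ZMod N) = 0 := by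
      push_cast
      rw [ZMod.natCast_val, ZMod.cast_id]
      simpa [nsmul_eq_mul] using hkill x hx
    rw [ZMod.natCast_eq_zero_iff] at h1
    obtain ⟨c, hc⟩ := h1
    -- d * val = N * c = m * d * c, so val = m * c
    have hvalmc : x.val = m * c := by
      have : d * x.val = d * (m * c) := by rw [hc, ← hmd]; ring
      exact Nat.eq_of_mul_eq_mul_left hd this
    refine ⟨c, ?_, ?_⟩
    · have hlt : x.val < N := ZMod.val_lt x
      rw [hvalmc, ← hmd] at hlt
      exact lt_of_mul_lt_mul_left (by simpa [Nat.mul_comm] using hlt) (Nat.zero_le m)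
    · rw [Nat.mul_comm c m, ← hvalmc, ZMod.natCast_val, ZMod.cast_id]
  -- full characterization of H via cardinality
  have hHiff : ∀ x : ZMod N, x ∈ H ↔ ∃ p < d, x = ((p * m : ℕ) : ZMod N) := by
    set T : Finset (ZMod N) := (Finset.range d).image (fun p => ((p * m : ℕ) : ZMod N))
      with hT_def
    have hinj : Set.InjOn (fun p : ℕ => ((p * m : ℕ) : ZMod N)) (Finset.range d) := by
      intro a ha b hb hab
      simp only [Finset.coe_range, Set.mem_Iio] at ha hb
      have ha' : a * m < N := by
        calc a * m < d * m := by exact (Nat.mul_lt_mul_right hm).mpr ha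
        _ = N := by rw [Nat.mul_comm]; exact hmd
      have hb' : b * m < N := by
        calc b * m < d * m := by exact (Nat.mul_lt_mul_right hm).mpr hb
        _ = N := by rw [Nat.mul_comm]; exact hmd
      have := congrArg ZMod.val hab
      simp only [ZMod.val_cast_of_lt ha', ZMod.val_cast_of_lt hb'] at this
      exact Nat.eq_of_mul_eq_mul_right hm this
    have hcardT : T.card = d := by
      rw [hT_def, Finset.card_image_of_injOn hinj, Finset.card_range]
    have hsub : (H : Set (ZMod N)) ⊆ ↑T := by
      intro x hx
      obtain ⟨p, hp, hxe⟩ := hval x hx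
      have hxT : x ∈ T := by
        rw [hT_def]
        exact Finset.mem_image.mpr ⟨p, Finset.mem_range.mpr hp, hxe.symm⟩
      exact hxT
    have hncard : (H : Set (ZMod N)).ncard = d := by
      rw [← Nat.card_coe_set_eq]
      simpa using hcard
    have heq : (H : Set (ZMod N)) = ↑T :=
      Set.eq_of_subset_of_ncard_le hsub
        (by rw [Set.ncard_coe_finset, hcardT, hncard]) (T.finite_toSet)
    intro x
    constructor
    · intro hx
      have : x ∈ (T : Set (ZMod N)) := heq ▸ hx
      simp only [hT_def, Finset.coe_image, Finset.coe_range, Set.mem_image,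
        Set.mem_Iio] at this
      obtain ⟨p, hp, hxe⟩ := this
      exact ⟨p, hp, hxe.symm⟩
    · rintro ⟨p, hp, rfl⟩
      have : ((p * m : ℕ) : ZMod N) ∈ (T : Set (ZMod N)) := by
        simp only [hT_def, Finset.coe_image, Finset.coe_range, Set.mem_image, Set.mem_Iio]
        exact ⟨p, hp, rfl⟩
      rw [← heq] at this
      exact this
  -- m ∈ H (as a cast)
  have hmH : ((m : ℕ) : ZMod N) ∈ H := by
    rw [hHiff]
    rcases Nat.lt_or_ge 1 d with h2 | h1
    · exact ⟨1, h2, by rw [Nat.one_mul]⟩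
    · have hd1 : d = 1 := le_antisymm h1 hd
      have hmN : m = N := by rw [hm_def, hd1, Nat.div_one]
      exact ⟨0, hd, by simp [hmN]⟩
  -- k0 < m
  have hk0m : k0 < m := by
    by_contra hge
    push_neg at hge
    have hmemS : ((k0 - m : ℕ) : ZMod N) ∈ S := by
      rw [hH, Nat.cast_sub hge]
      have : (k0 : ZMod N) - (m : ℕ) - (k0 : ZMod N) = -((m : ℕ) : ZMod N) := by ring
      rw [this]
      exact neg_mem hmH
    rcases Nat.lt_or_ge m k0 with hlt | hle
    · have := hmin (k0 - m) (by omega) hmemS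
      omega
    · have hk0eq : k0 = m := le_antisymm hle hge
      rw [hk0eq, Nat.sub_self] at hmemS
      exact h0 (by simpa using hmemS)
  -- N = 2 * k0 * d
  have hNeq : N = 2 * k0 * d := by
    have hnegk0 : (-(k0 : ZMod N)) ∈ S := hneg _ hk0S
    have h2k0H : -(((2 * k0 : ℕ)) : ZMod N) ∈ H := by
      have := (hH _).mp hnegk0
      have he : -(k0 : ZMod N) - (k0 : ZMod N) = -((2 * k0 : ℕ) : ZMod N) := by
        push_cast; ring
      rwa [he] at this
    have hz : ((d * (2 * k0) : ℕ) : ZMod N) = 0 := by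
      have := hkill _ h2k0H
      have h2 : (d : ℕ) • (((2 * k0 : ℕ)) : ZMod N) = 0 := by
        have := congrArg Neg.neg this
        simpa using this
      rw [nsmul_eq_mul] at h2
      push_cast
      push_cast at h2
      linear_combination h2
    rw [ZMod.natCast_eq_zero_iff] at hz
    obtain ⟨c, hc⟩ := hz
    -- d * (2 * k0) < 2 * N since k0 < m and m * d = N
    have hlt : d * (2 * k0) < 2 * N := by
      have : k0 * d < m * d := (Nat.mul_lt_mul_right hd).mpr hk0m
      rw [hmd] at this
      nlinarith
    have hpos : 0 < d * (2 * k0) := by positivity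
    have hc1 : c = 1 := by
      rcases c with _ | _ | c
      · omega
      · rfl
      · rw [hc] at hlt; nlinarith
    rw [hc1, Nat.mul_one] at hc
    show N = 2 * k0 * d
    rw [← hc]; ring
  refine ⟨?_, hk0m, hNeq⟩
  -- the set equality
  ext x
  simp only [Finset.mem_image, Finset.mem_range]
  constructor
  · intro hx
    obtain ⟨p, hp, he⟩ := (hHiff _).mp ((hH x).mp hx)
    refine ⟨p, hp, ?_⟩
    have : x = (k0 : ZMod N) + ((p * m : ℕ) : ZMod N) := by
      rw [← he]; ring
    rw [this]
    push_cast
    ring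
  · rintro ⟨p, hp, rfl⟩
    rw [hH]
    have he : (k0 : ZMod N) + (p : ZMod N) * ((m : ℕ) : ZMod N) - (k0 : ZMod N)
        = ((p * m : ℕ) : ZMod N) := by push_cast; ring
    rw [he, hHiff]
    exact ⟨p, hp, rfl⟩
end

section
/- For a generic nonzero q ∈ ℂ and a positive integer d, the rational function identity ∑_{σ ∈ S_3} [ ( q^{−3d/2} z_{σ(1)}^d − (q^{d/2} + q^{−d/2}) z_{σ(2)}^d + q^{3d/2} z_{σ(3)}^d ) · ∏_{1≤a<b≤3} ( (z_{σ(a)}^d − z_{σ(b)}^d)(z_{σ(a)}^d − q^{−2d} z_{σ(b)}^d) / (z_{σ(a)}^d + q^{−d} z_{σ(b)}^d) ) ] = 0 holds in ℂ(z_1, z_2, z_3). (It suffices to prove the case d = 1 after substituting u_i = z_i^d.) -/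
/-!
With `u i = z_i ^ d` and `c = q ^ (-d)`, pulling the factor `q ^ (3d/2)` out of each coefficient
turns the coefficients into `c³`, `-(c + c²)` and `1`. Over the common denominator
`∏_{i ≠ j} (u i + c * u j)`, which is nonzero in `ℂ(z₁, z₂, z₃)`, the symmetrized sum then becomes a
polynomial identity in `c` and the `u i`, valid in any field.
-/

open Equiv MvPolynomial

theorem Equiv.Perm.sum_fin_three {M : Type*} [AddCommMonoid M] (f : Fin 3 → Fin 3 → Fin 3 → M) :
    ∑ σ : Perm (Fin 3), f (σ 0) (σ 1) (σ 2) =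
      f 0 1 2 + f 0 2 1 + f 1 0 2 + f 1 2 0 + f 2 0 1 + f 2 1 0 := by
  rw [show (Finset.univ : Finset (Perm (Fin 3))) =
      {1, swap 1 2, swap 0 1, swap 0 1 * swap 1 2, swap 0 2 * swap 1 2, swap 0 2} by decide,
    Finset.sum_insert (by decide), Finset.sum_insert (by decide), Finset.sum_insert (by decide),
    Finset.sum_insert (by decide), Finset.sum_insert (by decide), Finset.sum_singleton]
  simp [swap_apply_def, add_assoc]

theorem MvPolynomial.X_pow_add_C_mul_X_pow_ne_zero {R σ : Type*} [CommRing R] [Nontrivial R]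
    {i j : σ} (hij : i ≠ j) {d : ℕ} (hd : d ≠ 0) (c : R) : X i ^ d + C c * X j ^ d ≠ 0 := by
  classical
  intro h
  simpa [Pi.single_apply, hij.symm, hd] using congrArg (eval (Pi.single i 1)) h

section Serre

variable {K : Type*} [Field K]

def serreFactor (c v w : K) : K := (v - w) * (v - c ^ 2 * w) / (v + c * w)

theorem sum_perm_serreFactor_eq_zero (c : K) (u : Fin 3 → K)
    (hu : ∀ i j, i ≠ j → u i + c * u j ≠ 0) :
    ∑ σ : Perm (Fin 3), (c ^ 3 * u (σ 0) - (c + c ^ 2) * u (σ 1) + u (σ 2)) *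
      (serreFactor c (u (σ 0)) (u (σ 1)) * serreFactor c (u (σ 0)) (u (σ 2)) *
        serreFactor c (u (σ 1)) (u (σ 2))) = 0 := by
  rw [Perm.sum_fin_three fun i j k => (c ^ 3 * u i - (c + c ^ 2) * u j + u k) *
    (serreFactor c (u i) (u j) * serreFactor c (u i) (u k) * serreFactor c (u j) (u k))]
  simp only [serreFactor]
  field_simp [hu 0 1 (by decide), hu 1 0 (by decide), hu 0 2 (by decide), hu 2 0 (by decide),
    hu 1 2 (by decide), hu 2 1 (by decide)]
  ring

end Serre

theorem stmt_7_general (q s : ℂ) (hq : q ≠ 0) (hs : s ^ 2 = q)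
    (d : ℕ) (hd : 0 < d) :
    let K := FractionRing (MvPolynomial (Fin 3) ℂ)
    let u : Fin 3 → K := fun i =>
      (algebraMap (MvPolynomial (Fin 3) ℂ) K (MvPolynomial.X i)) ^ d
    let qK : K := algebraMap (MvPolynomial (Fin 3) ℂ) K (MvPolynomial.C q)
    let sK : K := algebraMap (MvPolynomial (Fin 3) ℂ) K (MvPolynomial.C s)
    let F : Equiv.Perm (Fin 3) → Fin 3 → Fin 3 → K := fun σ a b =>
      ((u (σ a) - u (σ b)) * (u (σ a) - qK ^ (-(2 * (d : ℤ))) * u (σ b))) /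
        (u (σ a) + qK ^ (-(d : ℤ)) * u (σ b))
    ∑ σ : Equiv.Perm (Fin 3),
      (sK ^ (-(3 * (d : ℤ))) * u (σ 0) - (sK ^ (d : ℤ) + sK ^ (-(d : ℤ))) * u (σ 1)
          + sK ^ (3 * (d : ℤ)) * u (σ 2)) *
        (F σ 0 1 * F σ 0 2 * F σ 1 2) = 0 := by
  intro K u qK sK F
  set c := qK ^ (-(d : ℤ))
  have hsK : sK ≠ 0 := by simpa [sK, ← hs] using hq
  have hqK : qK = sK ^ 2 := by simp only [qK, sK, ← hs, map_pow]
  have hc : c = algebraMap (MvPolynomial (Fin 3) ℂ) K (C (q ^ (-(d : ℤ)))) := by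
    simp only [c, qK, ← algebraMap_eq, ← IsScalarTower.algebraMap_apply, map_zpow₀]
  have hu : ∀ i j, i ≠ j → u i + c * u j ≠ 0 := fun i j hij => by
    simpa [u, hc, ← map_pow, ← map_mul, ← map_add] using
      X_pow_add_C_mul_X_pow_ne_zero hij hd.ne' (q ^ (-(d : ℤ)))
  have hF : ∀ σ a b, F σ a b = serreFactor c (u (σ a)) (u (σ b)) := fun σ a b => by
    simp only [F, serreFactor, c, hqK, ← zpow_natCast, ← zpow_mul]
    ring_nf
  have hcoeff : ∀ x y z : K,
      sK ^ (-(3 * (d : ℤ))) * x - (sK ^ (d : ℤ) + sK ^ (-(d : ℤ))) * y + sK ^ (3 * (d : ℤ)) * z =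
        sK ^ (3 * (d : ℤ)) * (c ^ 3 * x - (c + c ^ 2) * y + z) := fun x y z => by
    simp only [c, hqK, ← zpow_natCast, ← zpow_mul, mul_add, mul_sub, ← mul_assoc,
      ← zpow_add₀ hsK]
    ring_nf
  simp only [hF, hcoeff, mul_assoc (sK ^ (3 * (d : ℤ))), ← Finset.mul_sum]
  rw [sum_perm_serreFactor_eq_zero c u hu, mul_zero]

/-- The rational-function identity underlying the twisted quantum Serre relation (Q10):
`∑_{σ∈S₃} (q^{−3d/2} z_{σ(1)}^d − (q^{d/2}+q^{−d/2}) z_{σ(2)}^d + q^{3d/2} z_{σ(3)}^d) ·`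
`∏_{a<b} ((z_{σ(a)}^d − z_{σ(b)}^d)(z_{σ(a)}^d − q^{−2d} z_{σ(b)}^d))/(z_{σ(a)}^d + q^{−d} z_{σ(b)}^d) = 0`
in `ℂ(z₁,z₂,z₃)`, where `s = q^{1/2}` is a fixed square root of `q`. -/
theorem stmt_7 (q s : ℂ) (hq : q ≠ 0) (hs : s ^ 2 = q)
    (hgen : ∀ n : ℕ, 0 < n → q ^ n ≠ 1) (d : ℕ) (hd : 0 < d) :
    let K := FractionRing (MvPolynomial (Fin 3) ℂ)
    let u : Fin 3 → K := fun i =>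
      (algebraMap (MvPolynomial (Fin 3) ℂ) K (MvPolynomial.X i)) ^ d
    let qK : K := algebraMap (MvPolynomial (Fin 3) ℂ) K (MvPolynomial.C q)
    let sK : K := algebraMap (MvPolynomial (Fin 3) ℂ) K (MvPolynomial.C s)
    let F : Equiv.Perm (Fin 3) → Fin 3 → Fin 3 → K := fun σ a b =>
      ((u (σ a) - u (σ b)) * (u (σ a) - qK ^ (-(2 * (d : ℤ))) * u (σ b))) /
        (u (σ a) + qK ^ (-(d : ℤ)) * u (σ b))
    ∑ σ : Equiv.Perm (Fin 3),
      (sK ^ (-(3 * (d : ℤ))) * u (σ 0) - (sK ^ (d : ℤ) + sK ^ (-(d : ℤ))) * u (σ 1)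
          + sK ^ (3 * (d : ℤ)) * u (σ 2)) *
        (F σ 0 1 * F σ 0 2 * F σ 1 2) = 0 :=
  stmt_7_general q s hq hs d hd
end
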